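/- A finite semigroup S satisfies the identity (x y)^ω = (y x)^ω (x y)^ω for all x, y ∈ S if and only if every regular ∼_D-class D of S is a right group, i.e., D is closed under multiplication and y^ω x = x for all x, y ∈ D. -/
import Mathlib


namespace WordEq

variable {C X S : Type*}

/-- `spow u n = u^(n+1)` : positive powers in a semigroup. -/
def spow [Mul S] (u : S) : ℕ → S
  | 0 => u
  | n + 1 => spow u n * u

/-- `e` is the ω-power of `u`, i.e. the (unique) idempotent among the
positive powers `u, u², u³, …` of `u`. -/
def IsOmega [Mul S] (u e : S) : Prop := (∃ n : ℕ, spow u n = e) ∧ e * e = e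

/-- Extension of a substitution `σ : 𝒳 → Σ⁺` to words over `Ω = Σ ⊎ 𝒳`,
fixing the constants. -/
def subst (σ : X → List C) (w : List (C ⊕ X)) : List C :=
  w.flatMap (Sum.elim (fun a => [a]) σ)

/-- `p^k` occurs as a factor of `w`. -/
def hasPowFactor (w p : List C) (k : ℕ) : Prop :=
  ∃ u v : List C, w = u ++ (List.replicate k p).flatten ++ v

/-- The exponent of periodicity of a word: the largest `k` such that `p^k`
is a factor of `w` for some nonempty `p`. -/
noncomputable def expWord (w : List C) : ℕ :=
  sSup {k : ℕ | ∃ p : List C, p ≠ [] ∧ hasPowFactor w p k}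

/-- The exponent of periodicity of a substitution. -/
noncomputable def expSub [Fintype X] (σ : X → List C) : ℕ :=
  Finset.univ.sup fun x : X => expWord (σ x)

/-- `μ` is (the restriction to nonempty words of) a semigroup homomorphism
`Ω⁺ → S`. -/
def IsConstraint [Mul S] (μ : List (C ⊕ X) → S) : Prop :=
  ∀ u v : List (C ⊕ X), u ≠ [] → v ≠ [] → μ (u ++ v) = μ u * μ v

/-- `σ : 𝒳 → Σ⁺` is a solution of the word equation `U = V`. -/
def IsSolution (U V : List (C ⊕ X)) (σ : X → List C) : Prop :=
  (∀ x : X, σ x ≠ []) ∧ subst σ U = subst σ V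

/-- `σ` is a solution of the word equation `U = V` with constraint `μ`. -/
def IsSolutionC [Mul S] (U V : List (C ⊕ X)) (μ : List (C ⊕ X) → S)
    (σ : X → List C) : Prop :=
  IsSolution U V σ ∧ ∀ x : X, μ ((σ x).map Sum.inl) = μ [Sum.inr x]

/-- Each variable occurs at most twice in `UV`. -/
def Quadratic [DecidableEq C] [DecidableEq X] (U V : List (C ⊕ X)) : Prop :=
  ∀ x : X, (U ++ V).count (Sum.inr x) ≤ 2

/-- `x ≤_L y` iff `x ∈ S¹y`. -/
def leL [Mul S] (x y : S) : Prop := x = y ∨ ∃ u, x = u * y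

/-- `x ≤_R y` iff `x ∈ yS¹`. -/
def leR [Mul S] (x y : S) : Prop := x = y ∨ ∃ u, x = y * u

/-- `x ≤_J y` iff `x ∈ S¹yS¹`. -/
def leJ [Mul S] (x y : S) : Prop :=
  x = y ∨ (∃ u, x = u * y) ∨ (∃ v, x = y * v) ∨ (∃ u v, x = u * y * v)

/-- Green's relation `∼_L`. -/
def eqL [Mul S] (x y : S) : Prop := leL x y ∧ leL y x

/-- Green's relation `∼_R`. -/
def eqR [Mul S] (x y : S) : Prop := leR x y ∧ leR y x

/-- Green's relation `∼_J`. -/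
def eqJ [Mul S] (x y : S) : Prop := leJ x y ∧ leJ y x

/-- Green's relation `∼_D = ∼_L ∘ ∼_R`. -/
def eqD [Mul S] (x y : S) : Prop := ∃ z, eqL x z ∧ eqR z y

section Aux

variable {S' : Type*} [Semigroup S']

theorem spow_succ_left (u : S') (n : ℕ) : spow u (n + 1) = u * spow u n := by
  induction n with
  | zero => rfl
  | succ n ih =>
    calc spow u (n + 2) = spow u (n + 1) * u := rfl
    _ = (u * spow u n) * u := by rw [ih]
    _ = u * (spow u n * u) := by rw [mul_assoc]
    _ = u * spow u (n + 1) := rfl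

theorem spow_add (u : S') (m n : ℕ) : spow u (m + n + 1) = spow u m * spow u n := by
  induction n with
  | zero => rfl
  | succ n ih =>
    have h : m + (n + 1) + 1 = (m + n + 1) + 1 := by omega
    rw [h]
    calc spow u ((m + n + 1) + 1) = spow u (m + n + 1) * u := rfl
    _ = (spow u m * spow u n) * u := by rw [ih]
    _ = spow u m * (spow u n * u) := by rw [mul_assoc]
    _ = spow u m * spow u (n + 1) := rfl

theorem spow_idem {e : S'} (he : e * e = e) (n : ℕ) : spow e n = e := by
  induction n with
  | zero => rfl
  | succ n ih => show spow e n * e = e; rw [ih, he]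

theorem spow_spow (u : S') (n m : ℕ) :
    spow (spow u n) m = spow u (n * m + n + m) := by
  induction m with
  | zero => have h : n * 0 + n + 0 = n := by ring
            rw [h]; rfl
  | succ m ih =>
    calc spow (spow u n) (m + 1) = spow (spow u n) m * spow u n := rfl
    _ = spow u (n * m + n + m) * spow u n := by rw [ih]
    _ = spow u ((n * m + n + m) + n + 1) := (spow_add u _ n).symm
    _ = spow u (n * (m + 1) + n + (m + 1)) := by ring_nf

theorem left_fix {e y : S'} (h : e * y = y) (n : ℕ) : e * spow y n = spow y n := by
  induction n with
  | zero => exact h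
  | succ n ih =>
    rw [spow_succ_left, ← mul_assoc, h, ← spow_succ_left]

theorem spow_congr_add (u : S') {a b : ℕ} (h : spow u a = spow u b) (s : ℕ) :
    spow u (a + s) = spow u (b + s) := by
  induction s with
  | zero => exact h
  | succ s ih =>
    show spow u (a + s) * u = spow u (b + s) * u
    rw [ih]

theorem exists_idem [Finite S'] (u : S') :
    ∃ n : ℕ, spow u n * spow u n = spow u n := by
  obtain ⟨i, j, hne, hij⟩ := Finite.exists_ne_map_eq_of_infinite (spow u)
  have key : ∃ i' p, 0 < p ∧ spow u (i' + p) = spow u i' := by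
    rcases lt_or_gt_of_ne hne with h | h
    · exact ⟨i, j - i, by omega, by rw [show i + (j - i) = j by omega, hij]⟩
    · exact ⟨j, i - j, by omega, by rw [show j + (i - j) = i by omega, ← hij]⟩
  obtain ⟨i, p, hp, hper⟩ := key
  have iter : ∀ t s, spow u (i + s + t * p) = spow u (i + s) := by
    intro t
    induction t with
    | zero => simp
    | succ t ih =>
      intro s
      have h1 : i + s + (t + 1) * p = (i + p) + (s + t * p) := by ring
      have h2 : i + (s + t * p) = i + s + t * p := by ring
      rw [h1, spow_congr_add u hper (s + t * p), h2, ih]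
  have hq : 0 < (i + 1) * p := Nat.mul_pos (Nat.succ_pos i) hp
  have hin : i + 1 ≤ (i + 1) * p := Nat.le_mul_of_pos_right (i + 1) hp
  refine ⟨(i + 1) * p - 1, ?_⟩
  have e1 : ((i + 1) * p - 1) + ((i + 1) * p - 1) + 1
      = i + (((i + 1) * p - 1) - i) + (i + 1) * p := by omega
  have e2 : i + (((i + 1) * p - 1) - i) = (i + 1) * p - 1 := by omega
  calc spow u ((i + 1) * p - 1) * spow u ((i + 1) * p - 1)
      = spow u (((i + 1) * p - 1) + ((i + 1) * p - 1) + 1) := (spow_add u _ _).symm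
    _ = spow u (i + (((i + 1) * p - 1) - i) + (i + 1) * p) := by rw [e1]
    _ = spow u (i + (((i + 1) * p - 1) - i)) := iter (i + 1) _
    _ = spow u ((i + 1) * p - 1) := by rw [e2]

theorem quad (a b c d : S') : (a * b) * (c * d) = a * ((b * c) * d) := by
  rw [mul_assoc, mul_assoc]

theorem l1 [Finite S'] {a u w : S'} (h : a = u * (a * w)) :
    ∃ n, a * spow w n = a := by
  have haux : ∀ n, a = spow u n * (a * spow w n) := by
    intro n
    induction n with
    | zero => exact h
    | succ n ih =>
      calc a = u * (a * w) := h
      _ = u * ((spow u n * (a * spow w n)) * w) := by rw [← ih]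
      _ = (u * spow u n) * (a * (spow w n * w)) := by simp only [mul_assoc]
      _ = spow u (n + 1) * (a * spow w (n + 1)) := by rw [← spow_succ_left]; rfl
  obtain ⟨n, hid⟩ := exists_idem u
  have hga : spow u n * a = a := by
    calc spow u n * a = spow u n * (spow u n * (a * spow w n)) := by rw [← haux n]
    _ = (spow u n * spow u n) * (a * spow w n) := by rw [mul_assoc]
    _ = spow u n * (a * spow w n) := by rw [hid]
    _ = a := (haux n).symm
  refine ⟨n, ?_⟩
  calc a * spow w n = (spow u n * a) * spow w n := by rw [hga]
  _ = spow u n * (a * spow w n) := by rw [mul_assoc]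
  _ = a := (haux n).symm

theorem spow_factor (z k : S') (n : ℕ) : ∃ c, spow (z * k) n = z * c := by
  induction n with
  | zero => exact ⟨k, rfl⟩
  | succ n ih =>
    obtain ⟨c, hc⟩ := ih
    exact ⟨c * (z * k), by
      show spow (z * k) n * (z * k) = z * (c * (z * k))
      rw [hc, mul_assoc]⟩

theorem right_inv {e w : S'} (he : e * e = e) (h : leR e w) :
    ∃ k, w * k = e ∧ k * e = k := by
  rcases h with h | ⟨u, hu⟩
  · exact ⟨e, by rw [← h]; exact he, by rw [he]⟩
  · exact ⟨u * e, by rw [← mul_assoc, ← hu, he], by rw [mul_assoc, he]⟩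

theorem MC {S : Type} [Semigroup S] [Finite S]
    (H : ∀ x y e f : S, IsOmega (x * y) e → IsOmega (y * x) f → e = f * e)
    {e z : S} (he : e * e = e) (hz : eqD z e) : e * z = z ∧ eqR z e := by
  obtain ⟨w, ⟨hzw, hwz⟩, hwe, hew⟩ := hz
  have h1 : e * w = w := by
    rcases hwe with h | ⟨u, hu⟩
    · rw [h]; rw [← h] at he ⊢; exact he
    · rw [hu, ← mul_assoc, he]
  obtain ⟨k, hk1, hk2⟩ := right_inv he hew
  obtain ⟨p, hp⟩ : ∃ p, z = p * w := by
    rcases hzw with h | ⟨u, hu⟩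
    · exact ⟨e, by rw [h1, h]⟩
    · exact ⟨u, hu⟩
  obtain ⟨q, hq⟩ : ∃ q, w = q * z := by
    rcases hwz with h | ⟨u, hu⟩
    · exact ⟨e, by rw [← h]; exact h1.symm⟩
    · exact ⟨u, hu⟩
  have hzkw : z * (k * w) = z := by
    calc z * (k * w) = (p * w) * (k * w) := by rw [← hp]
    _ = p * ((w * k) * w) := quad p w k w
    _ = p * (e * w) := by rw [hk1]
    _ = p * w := by rw [h1]
    _ = z := hp.symm
  have hqm : q * (z * k) = e := by rw [← mul_assoc, ← hq, hk1]
  have hme : (z * k) * e = z * k := by rw [mul_assoc, hk2]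
  have hidem : ((z * k) * q) * ((z * k) * q) = (z * k) * q := by
    calc ((z * k) * q) * ((z * k) * q) = (z * k) * ((q * (z * k)) * q) :=
      quad (z * k) q (z * k) q
    _ = (z * k) * (e * q) := by rw [hqm]
    _ = ((z * k) * e) * q := (mul_assoc (z * k) e q).symm
    _ = (z * k) * q := by rw [hme]
  have hf0z : ((z * k) * q) * z = z := by
    calc ((z * k) * q) * z = (z * k) * (q * z) := by rw [mul_assoc]
    _ = (z * k) * w := by rw [← hq]
    _ = z * (k * w) := by rw [mul_assoc]
    _ = z := hzkw
  have hH : (z * k) * q = e * ((z * k) * q) :=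
    H (z * k) q ((z * k) * q) e ⟨⟨0, rfl⟩, hidem⟩ ⟨⟨0, hqm⟩, he⟩
  have G1 : e * z = z := by
    calc e * z = e * (((z * k) * q) * z) := by rw [hf0z]
    _ = (e * ((z * k) * q)) * z := (mul_assoc e ((z * k) * q) z).symm
    _ = ((z * k) * q) * z := by rw [← hH]
    _ = z := hf0z
  refine ⟨G1, Or.inr ⟨z, G1.symm⟩, ?_⟩
  have hkey : e = q * (e * (z * k)) := by
    have h2 : e * (z * k) = z * k := by rw [← mul_assoc, G1]
    rw [h2]; exact hqm.symm
  obtain ⟨n, hn⟩ := l1 hkey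
  obtain ⟨c, hc⟩ := spow_factor z k n
  refine Or.inr ⟨c, ?_⟩
  calc e = e * spow (z * k) n := hn.symm
  _ = e * (z * c) := by rw [hc]
  _ = (e * z) * c := by rw [mul_assoc]
  _ = z * c := by rw [G1]

end Aux

/-- A finite semigroup `S` satisfies `(xy)^ω = (yx)^ω (xy)^ω`
iff every regular `∼_D`-class of `S` is a right group (closed under
multiplication and satisfying `y^ω x = x`). -/
theorem stmt13 (S : Type) [Semigroup S] [Finite S] :
    (∀ x y e f : S, IsOmega (x * y) e → IsOmega (y * x) f → e = f * e) ↔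
    (∀ e : S, e * e = e →
      ∀ x y : S, eqD x e → eqD y e →
        eqD (x * y) e ∧ ∀ f : S, IsOmega y f → f * x = x) := by
  constructor
  · -- forward direction
    intro H e he x y hx hy
    obtain ⟨hex, hxRe⟩ := MC H he hx
    obtain ⟨hey, hyRe⟩ := MC H he hy
    obtain ⟨t, hxt, -⟩ := right_inv he hxRe.2
    obtain ⟨s, hys, -⟩ := right_inv he hyRe.2
    constructor
    · -- eqD (x*y) e
      have hg : (t * x) * (t * x) = t * x := by
        calc (t * x) * (t * x) = t * ((x * t) * x) := quad t x t x
        _ = t * (e * x) := by rw [hxt]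
        _ = t * x := by rw [hex]
      have hHg : t * x = e * (t * x) :=
        H t x (t * x) e ⟨⟨0, rfl⟩, hg⟩ ⟨⟨0, hxt⟩, he⟩
      have hxT : x * (t * (x * t)) = e := by
        rw [← mul_assoc x t (x * t), hxt, he]
      have heT : e * (t * (x * t)) = t * (x * t) := by
        rw [← mul_assoc t x t, ← mul_assoc e (t * x) t, ← hHg]
      have hfin : (x * y) * (s * (t * (x * t))) = e := by
        calc (x * y) * (s * (t * (x * t)))
            = x * ((y * s) * (t * (x * t))) := quad x y s _
        _ = x * (e * (t * (x * t))) := by rw [hys]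
        _ = x * (t * (x * t)) := by rw [heT]
        _ = e := hxT
      have hxy : x * y = e * (x * y) := by rw [← mul_assoc, hex]
      exact ⟨x * y, ⟨Or.inl rfl, Or.inl rfl⟩,
        Or.inr ⟨x * y, hxy⟩, Or.inr ⟨s * (t * (x * t)), hfin.symm⟩⟩
    · -- right group identity
      rintro f ⟨⟨n, hfn⟩, hff⟩
      have hh : (s * y) * (s * y) = s * y := by
        calc (s * y) * (s * y) = s * ((y * s) * y) := quad s y s y
        _ = s * (e * y) := by rw [hys]
        _ = s * y := by rw [hey]
      have hHh : s * y = e * (s * y) :=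
        H s y (s * y) e ⟨⟨0, rfl⟩, hh⟩ ⟨⟨0, hys⟩, he⟩
      have hyS : y * (s * (y * s)) = e := by
        rw [← mul_assoc y s (y * s), hys, he]
      have heS : e * (s * (y * s)) = s * (y * s) := by
        rw [← mul_assoc s y s, ← mul_assoc e (s * y) s, ← hHh]
      have claim : ∀ m, spow y m * spow (s * (y * s)) m = e := by
        intro m
        induction m with
        | zero => exact hyS
        | succ m ih =>
          calc spow y (m + 1) * spow (s * (y * s)) (m + 1)
              = (y * spow y m) * (spow (s * (y * s)) m * (s * (y * s))) := by
                rw [spow_succ_left]; rfl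
          _ = y * ((spow y m * spow (s * (y * s)) m) * (s * (y * s))) :=
              quad y (spow y m) _ _
          _ = y * (e * (s * (y * s))) := by rw [ih]
          _ = y * (s * (y * s)) := by rw [heS]
          _ = e := hyS
      have hef : e * f = f := by rw [← hfn]; exact left_fix hey n
      have hefs : e = f * spow (s * (y * s)) n := by rw [← hfn]; exact (claim n).symm
      have hfe : f * e = e := by
        calc f * e = f * (f * spow (s * (y * s)) n) := by rw [← hefs]
        _ = (f * f) * spow (s * (y * s)) n := by rw [mul_assoc]
        _ = f * spow (s * (y * s)) n := by rw [hff]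
        _ = e := hefs.symm
      calc f * x = f * (e * x) := by rw [hex]
      _ = (f * e) * x := by rw [mul_assoc]
      _ = e * x := by rw [hfe]
      _ = x := hex
  · -- backward direction
    intro hRG x y e f hxye hyxf
    obtain ⟨⟨n, han⟩, hee⟩ := hxye
    obtain ⟨⟨m, hbm⟩, hff⟩ := hyxf
    set a := x * y with ha
    set b := y * x with hb
    have haM : spow a (n * m + n + m) = e := by
      rw [← spow_spow, han]; exact spow_idem hee m
    have hbM : spow b (n * m + n + m) = f := by
      have hcomm : n * m + n + m = m * n + m + n := by ring
      rw [hcomm, ← spow_spow, hbm]; exact spow_idem hff n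
    obtain ⟨M, haM2, hbM2⟩ : ∃ M, spow a M = e ∧ spow b M = f := ⟨_, haM, hbM⟩
    have haN : spow a (M + M + 1) = e := by rw [spow_add, haM2, hee]
    have hbN : spow b (M + M + 1) = f := by rw [spow_add, hbM2, hff]
    -- commuting lemmas
    have hI1 : ∀ k, spow a k * x = x * spow b k := by
      intro k
      induction k with
      | zero => exact mul_assoc x y x
      | succ k ih =>
        calc spow a (k + 1) * x = (spow a k * a) * x := rfl
        _ = spow a k * (a * x) := mul_assoc _ _ _
        _ = spow a k * (x * b) := by rw [ha, hb, mul_assoc x y x]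
        _ = (spow a k * x) * b := (mul_assoc _ _ _).symm
        _ = (x * spow b k) * b := by rw [ih]
        _ = x * (spow b k * b) := mul_assoc _ _ _
        _ = x * spow b (k + 1) := rfl
    have hI2 : ∀ k, spow b (k + 1) = y * (spow a k * x) := by
      intro k
      induction k with
      | zero =>
        show b * b = y * ((x * y) * x)
        rw [hb, mul_assoc y x b, ← mul_assoc x y x]
      | succ k ih =>
        calc spow b (k + 2) = spow b (k + 1) * b := rfl
        _ = (y * (spow a k * x)) * b := by rw [ih]
        _ = y * ((spow a k * x) * (y * x)) := mul_assoc _ _ _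
        _ = y * (spow a k * ((x * y) * x)) := by
            rw [mul_assoc (spow a k) x (y * x), ← mul_assoc x y x]
        _ = y * ((spow a k * (x * y)) * x) := by rw [← mul_assoc (spow a k) (x * y) x]
        _ = y * (spow a (k + 1) * x) := rfl
    -- the element v := spow a (M+M+1) * x
    have hvRe2 : e = (spow a (M + M + 1) * x) * (y * spow a (M + M)) := by
      have hsplit : spow a (M + M + 1) = x * (y * spow a (M + M)) := by
        rw [spow_succ_left, ha, mul_assoc x y (spow a (M + M))]
      calc e = e * e := hee.symm
      _ = spow a (M + M + 1) * spow a (M + M + 1) := by rw [haN]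
      _ = spow a (M + M + 1) * (x * (y * spow a (M + M))) := by rw [← hsplit]
      _ = (spow a (M + M + 1) * x) * (y * spow a (M + M)) := (mul_assoc _ _ _).symm
    have hfLv2 : f = (y * spow a (M + M)) * (spow a (M + M + 1) * x) := by
      have h2N : spow a (M + M) * spow a (M + M + 1)
          = spow a ((M + M + 1) + (M + M + 1)) := by
        rw [show (M + M + 1) + (M + M + 1) = (M + M) + (M + M + 1) + 1 by omega]
        rw [spow_add a (M + M) (M + M + 1)]
      have hbNN : spow b ((M + M + 1) + (M + M + 1) + 1) = f := by
        rw [spow_add b (M + M + 1) (M + M + 1), hbN, hff]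
      calc f = spow b ((M + M + 1) + (M + M + 1) + 1) := hbNN.symm
      _ = y * (spow a ((M + M + 1) + (M + M + 1)) * x) := hI2 _
      _ = y * ((spow a (M + M) * spow a (M + M + 1)) * x) := by rw [h2N]
      _ = y * (spow a (M + M) * (spow a (M + M + 1) * x)) := by
          rw [mul_assoc (spow a (M + M)) (spow a (M + M + 1)) x]
      _ = (y * spow a (M + M)) * (spow a (M + M + 1) * x) := by
          rw [← mul_assoc y (spow a (M + M)) (spow a (M + M + 1) * x)]
    have hvLf : spow a (M + M + 1) * x = x * f := by rw [hI1, hbN]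
    have heqDfe : eqD f e :=
      ⟨spow a (M + M + 1) * x,
        ⟨Or.inr ⟨y * spow a (M + M), hfLv2⟩, Or.inr ⟨x, hvLf⟩⟩,
        ⟨Or.inr ⟨x, by rw [haN]⟩, Or.inr ⟨y * spow a (M + M), hvRe2⟩⟩⟩
    have heqDee : eqD e e := ⟨e, ⟨Or.inl rfl, Or.inl rfl⟩, Or.inl rfl, Or.inl rfl⟩
    have := (hRG e hee e f heqDee heqDfe).2 f ⟨⟨0, rfl⟩, hff⟩
    exact this.symm

end WordEq
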